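/- arXiv:1903.01806 — 2 statements merged into one kernel-verified Lean document; each statement's English description precedes it below -/
import Mathlib

section
/- Let A be a real m × n matrix with all rows a₁, …, a_m nonzero and with smallest singular value σ_min(A) > 0 (i.e., A is injective), and let b ∈ ℝᵐ, x* ∈ ℝⁿ satisfy A x* = b. For each i let T_i(x) = x - ((⟨a_i, x⟩ - b_i)/‖a_i‖₂²) · a_i. Then for every x₀ ∈ ℝⁿ: ∑_{i=1}^{m} (‖a_i‖₂²/‖A‖_F²) · ‖x* - T_i(x₀)‖₂² ≤ (1 - σ_min(A)²/‖A‖_F²) · ‖x* - x₀‖₂². -/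
/-- The Euclidean norm on `Fin n → ℝ`. -/
noncomputable def enorm2 {n : ℕ} (x : Fin n → ℝ) : ℝ :=
  Real.sqrt (∑ i, (x i) ^ 2)

/-- The Frobenius norm of a real matrix. -/
noncomputable def frob {m n : ℕ} (A : Matrix (Fin m) (Fin n) ℝ) : ℝ :=
  Real.sqrt (∑ i, ∑ j, (A i j) ^ 2)

/-- The smallest singular value of a real matrix, as the infimum of `‖A x‖` over
unit vectors `x`. -/
noncomputable def sigmaMin {m n : ℕ} (A : Matrix (Fin m) (Fin n) ℝ) : ℝ :=
  sInf ((fun x => enorm2 (A.mulVec x)) '' {x : Fin n → ℝ | enorm2 x = 1})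

lemma enorm2_nonneg' {n : ℕ} (x : Fin n → ℝ) : 0 ≤ enorm2 x := Real.sqrt_nonneg _

lemma enorm2_sq {n : ℕ} (x : Fin n → ℝ) : enorm2 x ^ 2 = ∑ i, (x i) ^ 2 :=
  Real.sq_sqrt (Finset.sum_nonneg fun i _ => sq_nonneg _)

lemma enorm2_eq_zero {n : ℕ} {x : Fin n → ℝ} (h : enorm2 x = 0) : x = 0 := by
  have h2 : ∑ i, (x i) ^ 2 = 0 := by
    have := enorm2_sq x
    rw [h] at this; simpa using this.symm
  funext i
  have := (Finset.sum_eq_zero_iff_of_nonneg (fun i _ => sq_nonneg (x i))).1 h2 i (Finset.mem_univ i)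
  exact pow_eq_zero_iff (two_ne_zero) |>.1 this

lemma enorm2_smul {n : ℕ} (c : ℝ) (x : Fin n → ℝ) : enorm2 (c • x) = |c| * enorm2 x := by
  unfold enorm2
  rw [← Real.sqrt_sq_eq_abs, ← Real.sqrt_mul (sq_nonneg c)]
  congr 1
  rw [Finset.mul_sum]
  refine Finset.sum_congr rfl fun i _ => ?_
  simp [smul_eq_mul]; ring

/-- One-step contraction of the randomized Kaczmarz method: if all rows of `A` are
nonzero, `σ_min(A) > 0` and `A x* = b`, then
`∑ᵢ (‖aᵢ‖²/‖A‖_F²) ‖x* - Tᵢ(x₀)‖² ≤ (1 - σ_min(A)²/‖A‖_F²) ‖x* - x₀‖²`,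
where `Tᵢ(x) = x - ((⟨aᵢ, x⟩ - bᵢ)/‖aᵢ‖²) • aᵢ`. -/
theorem rkm_one_step_contraction {m n : ℕ} (A : Matrix (Fin m) (Fin n) ℝ)
    (hrows : ∀ i, A i ≠ 0) (hσ : 0 < sigmaMin A)
    (b : Fin m → ℝ) (xstar : Fin n → ℝ) (hsol : A.mulVec xstar = b)
    (x₀ : Fin n → ℝ) :
    ∑ i, ((enorm2 (A i)) ^ 2 / (frob A) ^ 2) *
        (enorm2 (xstar -
          (x₀ - (((∑ j, A i j * x₀ j) - b i) / (enorm2 (A i)) ^ 2) • A i))) ^ 2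
      ≤ (1 - (sigmaMin A) ^ 2 / (frob A) ^ 2) * (enorm2 (xstar - x₀)) ^ 2 := by
  -- notation
  set e : Fin n → ℝ := xstar - x₀ with he
  set σ := sigmaMin A with hσdef
  have hb : ∀ i, b i = ∑ j, A i j * xstar j := by
    intro i; rw [← hsol]; simp [Matrix.mulVec, dotProduct]
  -- row norms
  set N : Fin m → ℝ := fun i => ∑ j, (A i j) ^ 2 with hN
  have hNpos : ∀ i, 0 < N i := by
    intro i
    have hne : ∃ j, A i j ≠ 0 := by
      by_contra hc; push_neg at hc; exact hrows i (funext fun j => hc j)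
    obtain ⟨j, hj⟩ := hne
    exact Finset.sum_pos' (fun k _ => sq_nonneg _) ⟨j, Finset.mem_univ j, by positivity⟩
  have hrowsq : ∀ i, (enorm2 (A i))^2 = N i := fun i => enorm2_sq (A i)
  -- n > 0
  have hn : 0 < n := by
    rcases Nat.eq_zero_or_pos n with h0 | h; swap; · exact h
    subst h0
    exfalso
    have : ({x : Fin 0 → ℝ | enorm2 x = 1} : Set _) = ∅ := by
      ext x; simp [enorm2]
    rw [hσdef, sigmaMin, this] at hσ
    simp [Real.sInf_empty] at hσ
  -- m > 0
  have hm : 0 < m := by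
    rcases Nat.eq_zero_or_pos m with h0 | h; swap; · exact h
    subst h0
    exfalso
    set u : Fin n → ℝ := fun j => if j = ⟨0, hn⟩ then 1 else 0 with hu
    have hu1 : enorm2 u = 1 := by
      unfold enorm2
      rw [show (∑ i, (u i)^2) = 1 from ?_, Real.sqrt_one]
      rw [hu]
      rw [Finset.sum_eq_single (⟨0, hn⟩ : Fin n)]
      · simp
      · intro j _ hj; simp [hj]
      · simp
    have hmem : (0:ℝ) ∈ ((fun x => enorm2 (A.mulVec x)) '' {x : Fin n → ℝ | enorm2 x = 1}) := by
      refine ⟨u, hu1, ?_⟩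
      simp [enorm2]
    have hbdd : BddBelow ((fun x => enorm2 (A.mulVec x)) '' {x : Fin n → ℝ | enorm2 x = 1}) :=
      ⟨0, fun y ⟨x, _, hx⟩ => hx ▸ enorm2_nonneg' _⟩
    have := csInf_le hbdd hmem
    rw [hσdef, sigmaMin] at hσ
    linarith
  -- Frobenius
  have hF2 : (frob A)^2 = ∑ i, N i := by
    rw [frob, Real.sq_sqrt (Finset.sum_nonneg fun i _ => Finset.sum_nonneg fun j _ => sq_nonneg (A i j))]
  have hF2pos : 0 < (frob A)^2 := by
    rw [hF2]
    exact Finset.sum_pos (fun i _ => hNpos i) (Finset.univ_nonempty_iff.2 ⟨⟨0, hm⟩⟩)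
  -- residuals
  set d : Fin m → ℝ := fun i => ∑ j, A i j * e j with hd
  have hres : ∀ i, (∑ j, A i j * x₀ j) - b i = -(d i) := by
    intro i
    rw [hb i, hd]
    simp only [he, Pi.sub_apply]
    rw [← Finset.sum_sub_distrib, ← Finset.sum_neg_distrib]
    refine Finset.sum_congr rfl fun j _ => by ring
  set E := enorm2 e ^ 2 with hE
  have hEs : E = ∑ j, (e j)^2 := enorm2_sq e
  -- the key per-term identity
  have hterm : ∀ i, (enorm2 (xstar - (x₀ - (((∑ j, A i j * x₀ j) - b i) / (enorm2 (A i)) ^ 2) • A i)))^2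
      = E - (d i)^2 / N i := by
    intro i
    have hv : xstar - (x₀ - (((∑ j, A i j * x₀ j) - b i) / (enorm2 (A i)) ^ 2) • A i)
        = fun j => e j - (d i / N i) * A i j := by
      funext j
      simp only [Pi.sub_apply, Pi.smul_apply, smul_eq_mul, hres i, hrowsq i, he]
      ring
    rw [hv, enorm2_sq]
    have expand : ∀ j, (e j - (d i / N i) * A i j)^2
        = (e j)^2 - 2*(d i / N i)*(A i j * e j) + (d i / N i)^2 * (A i j)^2 := by
      intro j; ring
    rw [Finset.sum_congr rfl fun j _ => expand j]
    rw [Finset.sum_add_distrib, Finset.sum_sub_distrib, ← Finset.mul_sum, ← Finset.mul_sum]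
    have h2 : (∑ j, A i j * e j) = d i := rfl
    have h3 : (∑ j, (A i j)^2) = N i := rfl
    rw [h2, h3, ← hEs]
    have hNne : N i ≠ 0 := (hNpos i).ne'
    field_simp
    ring
  -- sum of d i ^2 = ‖A e‖²
  have hAe : ∑ i, (d i)^2 = (enorm2 (A.mulVec e))^2 := by
    rw [enorm2_sq]
    refine Finset.sum_congr rfl fun i _ => ?_
    simp [hd, Matrix.mulVec, dotProduct]
  -- σ ‖e‖ ≤ ‖A e‖
  have hkey : σ^2 * E ≤ ∑ i, (d i)^2 := by
    rcases eq_or_ne (enorm2 e) 0 with h0 | h0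
    · rw [hAe]
      have : e = 0 := enorm2_eq_zero h0
      rw [hE, h0, this]
      simp [Matrix.mulVec_zero, enorm2]
    · have hr : 0 < enorm2 e := lt_of_le_of_ne (enorm2_nonneg' e) (Ne.symm h0)
      set u : Fin n → ℝ := (enorm2 e)⁻¹ • e with hu
      have hu1 : enorm2 u = 1 := by
        rw [hu, enorm2_smul, abs_of_pos (inv_pos.2 hr), inv_mul_cancel₀ h0]
      have hAu : A.mulVec u = (enorm2 e)⁻¹ • A.mulVec e := by
        rw [hu, Matrix.mulVec_smul]
      have hbdd : BddBelow ((fun x => enorm2 (A.mulVec x)) '' {x : Fin n → ℝ | enorm2 x = 1}) :=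
        ⟨0, fun y ⟨x, _, hx⟩ => hx ▸ enorm2_nonneg' _⟩
      have hle : σ ≤ enorm2 (A.mulVec u) := csInf_le hbdd ⟨u, hu1, rfl⟩
      rw [hAu, enorm2_smul, abs_of_pos (inv_pos.2 hr)] at hle
      have hmul : σ * enorm2 e ≤ enorm2 (A.mulVec e) := by
        have h2 := mul_le_mul_of_nonneg_right hle (le_of_lt hr)
        rwa [mul_comm ((enorm2 e)⁻¹) _, mul_assoc, inv_mul_cancel₀ h0, mul_one] at h2
      have hsq : (σ * enorm2 e)^2 ≤ (enorm2 (A.mulVec e))^2 :=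
        pow_le_pow_left₀ (by positivity) hmul 2
      rw [hAe, hE]
      calc σ^2 * enorm2 e ^2 = (σ * enorm2 e)^2 := by ring
        _ ≤ _ := hsq
  -- LHS as a single expression
  have hLHS : ∑ i, ((enorm2 (A i)) ^ 2 / (frob A) ^ 2) *
        (enorm2 (xstar -
          (x₀ - (((∑ j, A i j * x₀ j) - b i) / (enorm2 (A i)) ^ 2) • A i))) ^ 2
      = E - (∑ i, (d i)^2) / (frob A)^2 := by
    rw [Finset.sum_congr rfl fun i _ => by rw [hterm i, hrowsq i]]
    have : ∀ i ∈ Finset.univ, N i / (frob A)^2 * (E - (d i)^2 / N i)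
        = (N i * E - (d i)^2) / (frob A)^2 := by
      intro i _
      have := (hNpos i).ne'
      field_simp
    rw [Finset.sum_congr rfl this, ← Finset.sum_div, Finset.sum_sub_distrib, ← Finset.sum_mul, ← hF2]
    rw [sub_div, mul_div_cancel_left₀ _ hF2pos.ne']
  rw [hLHS]
  have : (1 - σ ^ 2 / (frob A) ^ 2) * E = E - σ^2 * E / (frob A)^2 := by ring
  rw [this]
  have hdiv : σ^2 * E / (frob A)^2 ≤ (∑ i, (d i)^2) / (frob A)^2 := by
    gcongr
  linarith
end

section
/- Let A be a real m × n matrix with a QR decomposition A = Q R, where Q has orthonormal columns (Qᵀ Q = Iₙ), R is invertible, n ≥ 1, and all rows of Q are nonzero. Let b ∈ ℝᵐ and y* ∈ ℝⁿ satisfy A R⁻¹ y* = b. Then the randomized Kaczmarz method applied to the preconditioned system A R⁻¹ y = b, sampling row i with probability ‖q_i‖₂²/n (where q_i is the i-th row of Q = A R⁻¹) and updating y_{k+1} = y_k - ((⟨q_i, y_k⟩ - b_i)/‖q_i‖₂²) · q_iᵀ, satisfies for every k ≥ 0 and every y₀ ∈ ℝⁿ: 𝔼‖y* - y_k‖₂²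 ≤ (1 - 1/n)ᵏ · ‖y* - y₀‖₂², where the expectation is over the k independent row choices (written as a finite sum over index sequences weighted by the product of the sampling probabilities). -/
open Matrix

/-- The Euclidean norm on `Fin n → ℝ`. -/
noncomputable def enormFin {n : ℕ} (x : Fin n → ℝ) : ℝ :=
  Real.sqrt (∑ i, (x i) ^ 2)

lemma enorm_sq {n : ℕ} (x : Fin n → ℝ) : (enormFin x) ^ 2 = ∑ i, (x i) ^ 2 :=
  Real.sq_sqrt (Finset.sum_nonneg fun _ _ => sq_nonneg _)

lemma expand_sum {n : ℕ} (q e : Fin n → ℝ) (hs : (∑ j, q j ^ 2) ≠ 0) :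
    ∑ t, (e t - ((∑ j, q j * e j) / (∑ j, q j ^ 2)) * q t) ^ 2
      = (∑ t, e t ^ 2) - (∑ j, q j * e j) ^ 2 / (∑ j, q j ^ 2) := by
  set s := ∑ j, q j ^ 2 with hsdef
  set c := ∑ j, q j * e j with hcdef
  have e1 : ∑ t, (e t - c / s * q t) ^ 2
      = (∑ t, e t ^ 2) - (2 * (c / s)) * (∑ t, q t * e t)
        + (c / s) ^ 2 * (∑ t, q t ^ 2) := by
    rw [Finset.mul_sum, Finset.mul_sum, ← Finset.sum_sub_distrib,
      ← Finset.sum_add_distrib]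
    exact Finset.sum_congr rfl fun t _ => by ring
  rw [e1, ← hsdef, ← hcdef]
  field_simp
  ring

/-- one-step expectation identity -/
lemma rkm_step {m n : ℕ} (hn : 1 ≤ n) (Q : Matrix (Fin m) (Fin n) ℝ)
    (hQ : Qᵀ * Q = 1) (hrows : ∀ i, Q i ≠ 0) (e : Fin n → ℝ) :
    ∑ i : Fin m, ((enormFin (Q i)) ^ 2 / (n : ℝ)) *
      (enormFin (e - ((∑ j, Q i j * e j) / (enormFin (Q i)) ^ 2) • Q i)) ^ 2
      = (1 - 1 / (n : ℝ)) * (enormFin e) ^ 2 := by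
  have hn0 : (n : ℝ) ≠ 0 := by positivity
  have hs : ∀ i, (0 : ℝ) < ∑ j, Q i j ^ 2 := by
    intro i
    rcases Function.ne_iff.mp (hrows i) with ⟨j, hj⟩
    have h1 : (0:ℝ) < Q i j ^ 2 := by
      rw [sq]; exact mul_self_pos.mpr hj
    exact lt_of_lt_of_le h1
      (Finset.single_le_sum (f := fun t => Q i t ^ 2) (fun t _ => sq_nonneg _)
        (Finset.mem_univ j))
  have hterm : ∀ i : Fin m,
      ((enormFin (Q i)) ^ 2 / (n : ℝ)) *
        (enormFin (e - ((∑ j, Q i j * e j) / (enormFin (Q i)) ^ 2) • Q i)) ^ 2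
      = (∑ j, Q i j ^ 2) * (∑ t, e t ^ 2) / n - (∑ j, Q i j * e j) ^ 2 / n := by
    intro i
    have hsne : (∑ j, Q i j ^ 2) ≠ 0 := ne_of_gt (hs i)
    simp only [enorm_sq, Pi.sub_apply, Pi.smul_apply, smul_eq_mul]
    rw [expand_sum (Q i) e hsne]
    field_simp
  rw [Finset.sum_congr rfl fun i _ => hterm i, Finset.sum_sub_distrib]
  have hrowsum : ∑ i : Fin m, (∑ j, Q i j ^ 2) * (∑ t, e t ^ 2) / n
      = (n : ℝ) * (∑ t, e t ^ 2) / n := by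
    rw [← Finset.sum_div, ← Finset.sum_mul]
    congr 2
    rw [Finset.sum_comm]
    have h1 : ∀ j : Fin n, ∑ i : Fin m, Q i j ^ 2 = 1 := by
      intro j
      have h2 := congrArg (fun M => M j j) hQ
      simp only [Matrix.mul_apply, Matrix.transpose_apply, Matrix.one_apply_eq] at h2
      rw [← h2]
      exact Finset.sum_congr rfl fun i _ => pow_two (Q i j)
    simp [h1]
  have hinner : ∑ i : Fin m, (∑ j, Q i j * e j) ^ 2 / n = (∑ t, e t ^ 2) / n := by
    rw [← Finset.sum_div]
    congr 1
    have h1 : ∀ i, (∑ j, Q i j * e j) = Q.mulVec e i := fun i => rfl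
    have h2 : ∑ i : Fin m, (Q.mulVec e i) ^ 2
        = dotProduct (Q.mulVec e) (Q.mulVec e) := by
      simp [dotProduct, pow_two]
    have h3 : dotProduct (Q.mulVec e) (Q.mulVec e) = dotProduct e e := by
      rw [Matrix.dotProduct_mulVec, ← Matrix.mulVec_transpose, Matrix.mulVec_mulVec,
        hQ, Matrix.one_mulVec]
    simp only [h1, h2, h3]
    simp [dotProduct, pow_two]
  rw [hrowsum, hinner, enorm_sq]
  field_simp

lemma rkm_iter {m n : ℕ} (hn : 1 ≤ n) (Q : Matrix (Fin m) (Fin n) ℝ)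
    (hQ : Qᵀ * Q = 1) (hrows : ∀ i, Q i ≠ 0)
    (b : Fin m → ℝ) (ystar : Fin n → ℝ) (hsol : Q.mulVec ystar = b) :
    ∀ (k : ℕ) (y₀ : Fin n → ℝ),
    ∑ seq : Fin k → Fin m,
        (∏ j, (enormFin (Q (seq j))) ^ 2 / (n : ℝ)) *
          (enormFin (ystar -
            (List.ofFn seq).foldl
              (fun y i =>
                y - (((∑ j, Q i j * y j) - b i) / (enormFin (Q i)) ^ 2) • Q i)
              y₀)) ^ 2
      = (1 - 1 / (n : ℝ)) ^ k * (enormFin (ystar - y₀)) ^ 2 := by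
  intro k
  induction k with
  | zero =>
    intro y₀
    simp
  | succ k ih =>
    intro y₀
    rw [← Equiv.sum_comp (Fin.consEquiv fun _ : Fin (k+1) => Fin m)]
    rw [Fintype.sum_prod_type]
    have herr : ∀ (i : Fin m) (y : Fin n → ℝ),
        ystar - (y - (((∑ j, Q i j * y j) - b i) / (enormFin (Q i)) ^ 2) • Q i)
        = (ystar - y) - ((∑ j, Q i j * (ystar - y) j) / (enormFin (Q i)) ^ 2) • Q i := by
      intro i y
      have hb : b i = ∑ j, Q i j * ystar j := by rw [← hsol]; rfl
      funext t
      simp only [Pi.sub_apply, Pi.smul_apply, smul_eq_mul, hb, mul_sub,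
        Finset.sum_sub_distrib]
      ring
    have hstep : ∀ (i : Fin m) (rest : Fin k → Fin m),
        (∏ j, (enormFin (Q ((Fin.consEquiv fun _ : Fin (k+1) => Fin m) (i, rest) j))) ^ 2 / (n : ℝ)) *
          (enormFin (ystar -
            (List.ofFn ((Fin.consEquiv fun _ : Fin (k+1) => Fin m) (i, rest))).foldl
              (fun y i =>
                y - (((∑ j, Q i j * y j) - b i) / (enormFin (Q i)) ^ 2) • Q i)
              y₀)) ^ 2
        = ((enormFin (Q i)) ^ 2 / (n : ℝ)) *
          ((∏ j, (enormFin (Q (rest j))) ^ 2 / (n : ℝ)) *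
            (enormFin (ystar -
              (List.ofFn rest).foldl
                (fun y i =>
                  y - (((∑ j, Q i j * y j) - b i) / (enormFin (Q i)) ^ 2) • Q i)
                (y₀ - (((∑ j, Q i j * y₀ j) - b i) / (enormFin (Q i)) ^ 2) • Q i))) ^ 2) := by
      intro i rest
      have hc : (Fin.consEquiv fun _ : Fin (k+1) => Fin m) (i, rest) = Fin.cons i rest := rfl
      rw [hc, List.ofFn_succ]
      simp only [Fin.cons_zero, Fin.cons_succ, List.foldl_cons]
      rw [Fin.prod_univ_succ]
      simp only [Fin.cons_zero, Fin.cons_succ]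
      ring
    rw [Finset.sum_congr rfl fun i _ => Finset.sum_congr rfl fun rest _ => hstep i rest]
    have h4 : ∀ i : Fin m,
        ∑ rest : Fin k → Fin m,
          ((enormFin (Q i)) ^ 2 / (n : ℝ)) *
            ((∏ j, (enormFin (Q (rest j))) ^ 2 / (n : ℝ)) *
              (enormFin (ystar -
                (List.ofFn rest).foldl
                  (fun y i =>
                    y - (((∑ j, Q i j * y j) - b i) / (enormFin (Q i)) ^ 2) • Q i)
                  (y₀ - (((∑ j, Q i j * y₀ j) - b i) / (enormFin (Q i)) ^ 2) • Q i))) ^ 2)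
        = ((enormFin (Q i)) ^ 2 / (n : ℝ)) * ((1 - 1 / (n : ℝ)) ^ k *
            (enormFin ((ystar - y₀) -
              ((∑ j, Q i j * (ystar - y₀) j) / (enormFin (Q i)) ^ 2) • Q i)) ^ 2) := by
      intro i
      rw [← Finset.mul_sum, ih, ← herr i y₀, herr i y₀]
    rw [Finset.sum_congr rfl fun i _ => h4 i]
    have h5 : ∑ i : Fin m, ((enormFin (Q i)) ^ 2 / (n : ℝ)) * ((1 - 1 / (n : ℝ)) ^ k *
            (enormFin ((ystar - y₀) -
              ((∑ j, Q i j * (ystar - y₀) j) / (enormFin (Q i)) ^ 2) • Q i)) ^ 2)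
        = (1 - 1 / (n : ℝ)) ^ k * ∑ i : Fin m, ((enormFin (Q i)) ^ 2 / (n : ℝ)) *
            (enormFin ((ystar - y₀) -
              ((∑ j, Q i j * (ystar - y₀) j) / (enormFin (Q i)) ^ 2) • Q i)) ^ 2 := by
      rw [Finset.mul_sum]
      exact Finset.sum_congr rfl fun i _ => by ring
    rw [h5, rkm_step hn Q hQ hrows]
    ring

/-- Convergence of the randomized Kaczmarz method for the ideally preconditioned system
`A R⁻¹ y = b`, where `A = Q R`, `QᵀQ = Iₙ`, `R` is invertible and all rows of `Q` are
nonzero: sampling row `i` with probability `‖qᵢ‖²/n` (`qᵢ` the `i`-th row of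
`Q = A R⁻¹`) and applying the Kaczmarz step, the expected squared error after `k`
steps (a sum over index sequences of length `k` weighted by the product of the
sampling probabilities) is at most `(1 - 1/n)ᵏ ‖y* - y₀‖²`. -/
theorem preconditioned_rkm_convergence {m n : ℕ} (hn : 1 ≤ n)
    (A Q : Matrix (Fin m) (Fin n) ℝ) (R : Matrix (Fin n) (Fin n) ℝ)
    (hQR : A = Q * R) (hQ : Qᵀ * Q = 1) (hR : IsUnit R)
    (hrows : ∀ i, Q i ≠ 0)
    (b : Fin m → ℝ) (ystar : Fin n → ℝ) (hsol : (A * R⁻¹).mulVec ystar = b)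
    (y₀ : Fin n → ℝ) (k : ℕ) :
    ∑ seq : Fin k → Fin m,
        (∏ j, (enormFin ((A * R⁻¹) (seq j))) ^ 2 / (n : ℝ)) *
          (enormFin (ystar -
            (List.ofFn seq).foldl
              (fun y i =>
                y - (((∑ j, (A * R⁻¹) i j * y j) - b i) / (enormFin ((A * R⁻¹) i)) ^ 2) •
                  (A * R⁻¹) i)
              y₀)) ^ 2
      ≤ (1 - 1 / (n : ℝ)) ^ k * (enormFin (ystar - y₀)) ^ 2 := by
  have hdet : IsUnit R.det := (Matrix.isUnit_iff_isUnit_det R).mp hR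
  have hQeq : A * R⁻¹ = Q := by
    rw [hQR, Matrix.mul_assoc, Matrix.mul_nonsing_inv _ hdet, Matrix.mul_one]
  rw [hQeq] at hsol ⊢
  exact le_of_eq (rkm_iter hn Q hQ hrows b ystar hsol k y₀)
end
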